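/- arXiv:1209.6421 — 2 statements merged into one kernel-verified Lean document; each statement's English description precedes it below -/
import Mathlib

section
/- Every subset of 𝒫 that is meager with respect to the Ellentuck topology on 𝒫 is Ramsey null. -/
open Set

/-- A candidate pair: a vertex set `x ⊆ ℕ` together with a collection of finite subsets of ℕ. -/
abbrev PPair : Type := Set ℕ × Set (Finset ℕ)

/-- `S` is hereditary: subsets of members are members. -/
def Hereditary (S : Set (Finset ℕ)) : Prop := ∀ u v : Finset ℕ, u ⊆ v → v ∈ S → u ∈ S

/-- `(x, S)` is a polyhedron pair: members of `S` are finite subsets of `x`,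
`S` is hereditary, and `⋃ S = x`. -/
def IsPolyPair (P : PPair) : Prop :=
  (∀ u ∈ P.2, (u : Set ℕ) ⊆ P.1) ∧ Hereditary P.2 ∧ (∀ n ∈ P.1, ∃ u ∈ P.2, n ∈ u)

/-- Members of `𝒫`: polyhedron pairs with infinite vertex set. -/
def InfPoly (P : PPair) : Prop := IsPolyPair P ∧ P.1.Infinite

/-- Members of `𝒜𝒫`: polyhedron pairs with finite vertex set. -/
def FinPoly (P : PPair) : Prop := IsPolyPair P ∧ P.1.Finite

/-- `x ↾ n` : the set of the `n` smallest elements of `x`. -/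
noncomputable def vrestrict (x : Set ℕ) (n : ℕ) : Finset ℕ :=
  (Finset.range n).image (Nat.nth (· ∈ x))

/-- `S ↾ a = {u ∩ a : u ∈ S}`. -/
def frestrict (S : Set (Finset ℕ)) (a : Finset ℕ) : Set (Finset ℕ) :=
  (fun u => u ∩ a) '' S

/-- The `n`-th approximation `r_n(x,S) = (x ↾ n, S ↾ (x ↾ n))`. -/
noncomputable def approx (n : ℕ) (P : PPair) : PPair :=
  (↑(vrestrict P.1 n), frestrict P.2 (vrestrict P.1 n))

/-- `(y,T) ≤ (x,S)` iff `y ⊆ x` and `T ⊆ S`. -/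
def ple (P Q : PPair) : Prop := P.1 ⊆ Q.1 ∧ P.2 ⊆ Q.2

/-- The space `𝒫` of infinite polyhedron pairs. -/
def PolySpace : Type := {P : PPair // InfPoly P}

/-- The Ellentuck neighborhood `[(a,S_a); (A,S_A)]` as a subset of `𝒫`. -/
noncomputable def nbhd (a : PPair) (A : PolySpace) : Set PolySpace :=
  {B | ple B.1 A.1 ∧ ∃ n, approx n B.1 = a}

/-- The Ellentuck topology on `𝒫`, generated by the neighborhoods `[(a,S_a); (A,S_A)]`
with `(a,S_a) ∈ 𝒜𝒫` and `(A,S_A) ∈ 𝒫`. -/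
noncomputable def ellTop : TopologicalSpace PolySpace :=
  TopologicalSpace.generateFrom {s | ∃ a A, FinPoly a ∧ s = nbhd a A}

/-- `𝒳 ⊆ 𝒫` is Ramsey: for every nonempty neighborhood `[(a,S_a);(A,S_A)]` there is
`(B,S_B) ∈ [(a,S_a);(A,S_A)]` with `[(a,S_a);(B,S_B)] ⊆ 𝒳` or `[(a,S_a);(B,S_B)] ∩ 𝒳 = ∅`. -/
def IsRamsey (X : Set PolySpace) : Prop :=
  ∀ (a : PPair) (A : PolySpace), FinPoly a → (nbhd a A).Nonempty →
    ∃ B ∈ nbhd a A, nbhd a B ⊆ X ∨ nbhd a B ∩ X = ∅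
/-- `𝒳 ⊆ 𝒫` is Ramsey null: for every nonempty neighborhood `[(a,S_a);(A,S_A)]` there is
`(B,S_B) ∈ [(a,S_a);(A,S_A)]` with `[(a,S_a);(B,S_B)] ∩ 𝒳 = ∅`. -/
def IsRamseyNull (X : Set PolySpace) : Prop :=
  ∀ (a : PPair) (A : PolySpace), FinPoly a → (nbhd a A).Nonempty →
    ∃ B ∈ nbhd a A, nbhd a B ∩ X = ∅


section VR

lemma setOf_infinite {x : Set ℕ} (hx : x.Infinite) : (setOf (· ∈ x)).Infinite := hx

lemma vr_mem {x : Set ℕ} {m y : ℕ} :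
    y ∈ vrestrict x m ↔ ∃ k < m, Nat.nth (· ∈ x) k = y := by
  simp [vrestrict]

lemma vr_card {x : Set ℕ} (hx : x.Infinite) (m : ℕ) : (vrestrict x m).card = m := by
  rw [vrestrict, Finset.card_image_of_injective _ (Nat.nth_injective (setOf_infinite hx)),
    Finset.card_range]

lemma vr_subset {x : Set ℕ} (hx : x.Infinite) (m : ℕ) : ↑(vrestrict x m) ⊆ x := by
  intro y hy
  rcases vr_mem.1 hy with ⟨k, _, rfl⟩
  exact Nat.nth_mem_of_infinite (setOf_infinite hx) k

lemma vr_initial {x : Set ℕ} (hx : x.Infinite) {m : ℕ} {y : ℕ} (hy : y ∈ x)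
    (hy' : y ∉ vrestrict x m) : ∀ z ∈ vrestrict x m, z < y := by
  intro z hz
  rcases vr_mem.1 hz with ⟨j, hj, rfl⟩
  have : y ∈ Set.range (Nat.nth (· ∈ x)) := Nat.subset_range_nth hy
  rcases this with ⟨k, rfl⟩
  have hk : ¬ k < m := fun h => hy' (vr_mem.2 ⟨k, h, rfl⟩)
  exact (Nat.nth_lt_nth (setOf_infinite hx)).2 (lt_of_lt_of_le hj (le_of_not_gt hk))

lemma vr_eq_of {x : Set ℕ} (hx : x.Infinite) {m : ℕ} {c : Finset ℕ}
    (hcard : c.card = m) (hsub : ↑c ⊆ x)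
    (hinit : ∀ y ∈ x, y ∉ c → ∀ z ∈ c, z < y) : vrestrict x m = c := by
  set d := vrestrict x m with hd
  by_cases hdc : d ⊆ c
  · exact Finset.eq_of_subset_of_card_le hdc (by rw [hcard, vr_card hx])
  · rcases Finset.not_subset.1 hdc with ⟨z, hzd, hzc⟩
    have hzx : z ∈ x := vr_subset hx m hzd
    by_cases hcd : c ⊆ d
    · exact (Finset.eq_of_subset_of_card_le hcd (by rw [hcard, vr_card hx])).symm
    · rcases Finset.not_subset.1 hcd with ⟨y, hyc, hyd⟩
      have h1 : y < z := hinit z hzx hzc y hyc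
      have h2 : z < y := vr_initial hx (hsub hyc) hyd z hzd
      omega

lemma vr_mono {x : Set ℕ} {m' m : ℕ} (h : m' ≤ m) : vrestrict x m' ⊆ vrestrict x m :=
  Finset.image_subset_image (by simpa using Finset.range_subset_range.2 h)

lemma vr_eq_down {x y : Set ℕ} (hx : x.Infinite) (hy : y.Infinite) {m' m : ℕ}
    (h : m' ≤ m) (heq : vrestrict x m = vrestrict y m) :
    vrestrict y m' = vrestrict x m' := by
  apply vr_eq_of hy (vr_card hx m')
  · exact fun z hz => vr_subset hy m (heq ▸ vr_mono h hz)
  · intro z hz hz'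
    by_cases hzm : z ∈ vrestrict y m
    · rw [← heq] at hzm
      rcases vr_mem.1 hzm with ⟨k, hk, rfl⟩
      have hk' : ¬ k < m' := fun hlt => hz' (vr_mem.2 ⟨k, hlt, rfl⟩)
      intro w hw
      rcases vr_mem.1 hw with ⟨j, hj, rfl⟩
      exact (Nat.nth_lt_nth (setOf_infinite hx)).2 (lt_of_lt_of_le hj (le_of_not_gt hk'))
    · intro w hw
      exact vr_initial hy hz hzm w (heq ▸ vr_mono h hw)

lemma vr_union {b : Finset ℕ} {c : Set ℕ} (hc : c.Infinite)
    (hab : ∀ z ∈ c, ∀ x ∈ b, x < z) (k : ℕ) :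
    vrestrict (↑b ∪ c) (b.card + k) = b ∪ vrestrict c k := by
  have hbc : (↑b ∪ c : Set ℕ).Infinite := hc.mono Set.subset_union_right
  have hdisj : Disjoint b (vrestrict c k) := by
    rw [Finset.disjoint_left]
    intro z hzb hzc
    exact absurd (hab z (vr_subset hc k hzc) z hzb) (lt_irrefl z)
  apply vr_eq_of hbc
  · rw [Finset.card_union_of_disjoint hdisj, vr_card hc]
  · intro z hz
    rcases Finset.mem_union.1 hz with h | h
    · exact Or.inl h
    · exact Or.inr (vr_subset hc k h)
  · intro y hy hy'
    have hyc : y ∈ c := by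
      rcases hy with h | h
      · exact absurd (Finset.mem_union_left _ h) hy'
      · exact h
    have hyk : y ∉ vrestrict c k := fun h => hy' (Finset.mem_union_right _ h)
    intro z hz
    rcases Finset.mem_union.1 hz with h | h
    · exact hab y hyc z h
    · exact vr_initial hc hyc hyk z h

lemma inter_Ioi_infinite {Z : Set ℕ} (hZ : Z.Infinite) (v : ℕ) : (Z ∩ Set.Ioi v).Infinite := by
  apply Set.Infinite.mono _ (hZ.diff (Set.finite_Iic v))
  intro z hz
  exact ⟨hz.1, by simpa using hz.2⟩

end VR


section APPROX

lemma ple_refl (P : PPair) : ple P P := ⟨subset_rfl, subset_rfl⟩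

lemma ple_trans {P Q R : PPair} (h1 : ple P Q) (h2 : ple Q R) : ple P R :=
  ⟨h1.1.trans h2.1, h1.2.trans h2.2⟩

lemma union_singleton' (t : Finset ℕ) (a : ℕ) : t ∪ {a} = insert a t := by
  rw [Finset.insert_eq, Finset.union_comm]

lemma inter_helper {u w : Finset ℕ} (v : Finset ℕ) (h : u ⊆ w) : v ∩ w ∩ u = v ∩ u := by
  rw [Finset.inter_assoc, Finset.inter_eq_right.2 h]

lemma frestrict_frestrict (S : Set (Finset ℕ)) {u w : Finset ℕ} (h : u ⊆ w) :
    frestrict (frestrict S w) u = frestrict S u := by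
  ext v
  constructor
  · rintro ⟨v', ⟨v'', hv'', rfl⟩, rfl⟩
    exact ⟨v'', hv'', (inter_helper v'' h).symm⟩
  · rintro ⟨v', hv', rfl⟩
    exact ⟨v' ∩ w, ⟨v', hv', rfl⟩, inter_helper v' h⟩

lemma approx_card_eq {P Q : PPair} (hP : P.1.Infinite) (hQ : Q.1.Infinite) {k m : ℕ}
    (h : approx k P = approx m Q) : k = m := by
  have h1 : (↑(vrestrict P.1 k) : Set ℕ) = ↑(vrestrict Q.1 m) := congrArg Prod.fst h
  have := congrArg Finset.card (Finset.coe_injective h1)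
  rwa [vr_card hP, vr_card hQ] at this

lemma approx_down {P Q : PPair} (hP : P.1.Infinite) (hQ : Q.1.Infinite) {m' m : ℕ}
    (h : m' ≤ m) (heq : approx m P = approx m Q) : approx m' P = approx m' Q := by
  have h1 : vrestrict P.1 m = vrestrict Q.1 m :=
    Finset.coe_injective (congrArg Prod.fst heq)
  have h2 : frestrict P.2 (vrestrict P.1 m) = frestrict Q.2 (vrestrict Q.1 m) :=
    congrArg Prod.snd heq
  have h1' : vrestrict P.1 m' = vrestrict Q.1 m' := vr_eq_down hQ hP h h1.symm
  have h3 : frestrict P.2 (vrestrict P.1 m') = frestrict Q.2 (vrestrict Q.1 m') := by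
    rw [← frestrict_frestrict P.2 (vr_mono h : vrestrict P.1 m' ⊆ vrestrict P.1 m),
      ← frestrict_frestrict Q.2 (vr_mono h : vrestrict Q.1 m' ⊆ vrestrict Q.1 m),
      h2, h1']
  rw [approx, approx, h3, h1']

lemma nbhd_mono {a : PPair} {A A' : PolySpace} (h : ple A.1 A'.1) :
    nbhd a A ⊆ nbhd a A' := fun _ hD => ⟨ple_trans hD.1 h, hD.2⟩

lemma self_mem_nbhd (C : PolySpace) (m : ℕ) : C ∈ nbhd (approx m C.1) C :=
  ⟨ple_refl _, m, rfl⟩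

lemma nbhd_approx_antitone {C : PolySpace} {m' m : ℕ} (h : m' ≤ m) :
    nbhd (approx m C.1) C ⊆ nbhd (approx m' C.1) C := by
  rintro D ⟨hple, k, hk⟩
  have hk' : k = m := approx_card_eq D.2.2 C.2.2 hk
  subst hk'
  exact ⟨hple, m', approx_down D.2.2 C.2.2 h hk⟩

lemma basis_lemma {U : Set PolySpace} (hU : @IsOpen _ ellTop U) :
    ∀ C ∈ U, ∀ m₀ : ℕ, ∃ m ≥ m₀, nbhd (approx m C.1) C ⊆ U := by
  have hU' : TopologicalSpace.GenerateOpen {s | ∃ a A, FinPoly a ∧ s = nbhd a A} U := hU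
  clear hU
  induction hU' with
  | basic s hs =>
    rcases hs with ⟨a', A', _, rfl⟩
    rintro C ⟨hple, k, hk⟩ m₀
    refine ⟨max m₀ k, le_max_left _ _, ?_⟩
    rintro D ⟨hpleD, j, hj⟩
    have hj' : j = max m₀ k := approx_card_eq D.2.2 C.2.2 hj
    subst hj'
    have := approx_down D.2.2 C.2.2 (le_max_right m₀ k) hj
    exact ⟨ple_trans hpleD hple, k, this.trans hk⟩
  | univ => exact fun C _ m₀ => ⟨m₀, le_rfl, fun _ _ => trivial⟩
  | inter U₁ U₂ _ _ ih1 ih2 =>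
    rintro C ⟨hC1, hC2⟩ m₀
    rcases ih1 C hC1 m₀ with ⟨m₁, hm₁, hs1⟩
    rcases ih2 C hC2 m₀ with ⟨m₂, hm₂, hs2⟩
    refine ⟨max m₁ m₂, le_trans hm₁ (le_max_left _ _), fun D hD => ?_⟩
    exact ⟨hs1 (nbhd_approx_antitone (le_max_left m₁ m₂) hD),
      hs2 (nbhd_approx_antitone (le_max_right m₁ m₂) hD)⟩
  | sUnion S _ ih =>
    rintro C ⟨s, hs, hCs⟩ m₀
    rcases ih s hs C hCs m₀ with ⟨m, hm, hsub⟩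
    exact ⟨m, hm, fun D hD => ⟨s, hs, hsub hD⟩⟩

end APPROX


section SEQ

/-- Generic recursive construction of a sequence with invariants. -/
lemma build_seq {St : Type} (P : ℕ → St → Prop) (Rel : ℕ → St → St → Prop) (s0 : St)
    (h0 : P 0 s0) (hstep : ∀ k s, P k s → ∃ s', P (k + 1) s' ∧ Rel k s s') :
    ∃ F : ℕ → St, F 0 = s0 ∧ (∀ k, P k (F k)) ∧ (∀ k, Rel k (F k) (F (k + 1))) := by
  have key : ∀ k (p : {s // P k s}), ∃ q : {s // P (k + 1) s}, Rel k p.1 q.1 := by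
    intro k p
    rcases hstep k p.1 p.2 with ⟨s', h1, h2⟩
    exact ⟨⟨s', h1⟩, h2⟩
  choose g hg using key
  refine ⟨fun k => ((Nat.rec ⟨s0, h0⟩ g : ∀ k, {s // P k s}) k).1, rfl,
    fun k => ((Nat.rec ⟨s0, h0⟩ g : ∀ k, {s // P k s}) k).2, fun k => hg k _⟩

end SEQ

section BASE

/-- Bundled data of a "stem base": a finite vertex set with a polyhedron structure. -/
structure EBase where
  b : Finset ℕ
  Sa : Set (Finset ℕ)
  hSb : ∀ u ∈ Sa, u ⊆ b
  hSh : Hereditary Sa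
  hS0 : ∅ ∈ Sa
  hScov : ∀ m ∈ b, ∃ u ∈ Sa, m ∈ u

namespace EBase

variable (β : EBase)

/-- The discrete structure over `c`. -/
def patt (c : Set ℕ) : Set (Finset ℕ) := β.Sa ∪ {u | ∃ v ∈ c, u = {v}}

/-- The discrete polyhedron pair with free part `c`. -/
def pt (c : Set ℕ) : PPair := (↑β.b ∪ c, β.patt c)

lemma patt_mono {c c' : Set ℕ} (h : c ⊆ c') : β.patt c ⊆ β.patt c' := by
  rintro u (hu | ⟨v, hv, rfl⟩)
  · exact Or.inl hu
  · exact Or.inr ⟨v, h hv, rfl⟩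

lemma pt_ple {c c' : Set ℕ} (h : c ⊆ c') : ple (β.pt c) (β.pt c') :=
  ⟨Set.union_subset_union_right _ h, β.patt_mono h⟩

lemma polypair_pt (c : Set ℕ) : IsPolyPair (β.pt c) := by
  refine ⟨?_, ?_, ?_⟩
  · rintro u (hu | ⟨v, hv, rfl⟩)
    · exact fun x hx => Or.inl (β.hSb u hu hx)
    · intro x hx
      rw [Finset.coe_singleton, Set.mem_singleton_iff] at hx
      exact hx ▸ Or.inr hv
  · rintro u v huv (hv | ⟨w, hw, rfl⟩)
    · exact Or.inl (β.hSh u v huv hv)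
    · rcases Finset.subset_singleton_iff.1 huv with rfl | rfl
      · exact Or.inl β.hS0
      · exact Or.inr ⟨w, hw, rfl⟩
  · rintro m (hm | hm)
    · rcases β.hScov m hm with ⟨u, hu, hmu⟩
      exact ⟨u, Or.inl hu, hmu⟩
    · exact ⟨{m}, Or.inr ⟨m, hm, rfl⟩, Finset.mem_singleton_self m⟩

lemma infPoly_pt {c : Set ℕ} (hc : c.Infinite) : InfPoly (β.pt c) :=
  ⟨β.polypair_pt c, (hc.mono Set.subset_union_right)⟩

/-- `PolySpace` member for the discrete pair. -/
noncomputable def psp {c : Set ℕ} (hc : c.Infinite) : PolySpace := ⟨β.pt c, β.infPoly_pt hc⟩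

lemma empty_mem_of_poly {C : PPair} (hher : Hereditary C.2) {u : Finset ℕ} (hu : u ∈ C.2) :
    ∅ ∈ C.2 := hher ∅ u (Finset.empty_subset u) hu

lemma singleton_mem_of_poly {C : PPair} (hpoly : IsPolyPair C) {v : ℕ} (hv : v ∈ C.1) :
    {v} ∈ C.2 := by
  rcases hpoly.2.2 v hv with ⟨u, hu, hvu⟩
  exact hpoly.2.1 {v} u (Finset.singleton_subset_iff.2 hvu) hu

lemma frestrict_patt_b {c : Set ℕ} (hcb : ∀ v ∈ c, v ∉ β.b) :
    frestrict (β.patt c) β.b = β.Sa := by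
  ext w
  constructor
  · rintro ⟨u, hu | ⟨v, hv, rfl⟩, rfl⟩
    · show u ∩ β.b ∈ β.Sa
      rwa [Finset.inter_eq_left.2 (β.hSb u hu)]
    · show {v} ∩ β.b ∈ β.Sa
      rw [Finset.singleton_inter_of_notMem (hcb v hv)]
      exact β.hS0
  · intro hw
    exact ⟨w, Or.inl hw, Finset.inter_eq_left.2 (β.hSb w hw)⟩

/-- The central pattern computation. -/
lemma frestrict_eq {C : PPair} (hpoly : IsPolyPair C) (hne : C.1.Nonempty)
    {BIG : Set ℕ} (hsub : C.2 ⊆ β.patt BIG) (hBIG : ∀ v ∈ BIG, v ∉ β.b)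
    (hb : frestrict C.2 ↑β.b = β.Sa)
    {s : Finset ℕ} (hs : ↑s ⊆ C.1) (hsb : ∀ v ∈ s, v ∉ β.b) :
    frestrict C.2 (β.b ∪ s) = β.patt ↑s := by
  have hemp : ∅ ∈ C.2 := by
    rcases hne with ⟨v, hv⟩
    rcases hpoly.2.2 v hv with ⟨u, hu, _⟩
    exact empty_mem_of_poly hpoly.2.1 hu
  ext w
  constructor
  · rintro ⟨u, hu, rfl⟩
    rcases hsub hu with hu' | ⟨v, hv, rfl⟩
    · show u ∩ (β.b ∪ s) ∈ β.patt ↑s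
      rw [Finset.inter_eq_left.2 ((β.hSb u hu').trans Finset.subset_union_left)]
      exact Or.inl hu'
    · show {v} ∩ (β.b ∪ s) ∈ β.patt ↑s
      by_cases hvs : v ∈ s
      · rw [Finset.singleton_inter_of_mem (Finset.mem_union_right _ hvs)]
        exact Or.inr ⟨v, hvs, rfl⟩
      · rw [Finset.singleton_inter_of_notMem]
        · exact Or.inl β.hS0
        · intro hmem
          rcases Finset.mem_union.1 hmem with h | h
          · exact hBIG v hv h
          · exact hvs h
  · rintro (hw | ⟨v, hv, rfl⟩)
    · rw [← hb] at hw
      rcases hw with ⟨u, hu, rfl⟩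
      rcases hsub hu with hu' | ⟨v, hv, rfl⟩
      · refine ⟨u, hu, ?_⟩
        show u ∩ (β.b ∪ s) = u ∩ β.b
        rw [Finset.inter_eq_left.2 ((β.hSb u hu').trans Finset.subset_union_left),
          Finset.inter_eq_left.2 (β.hSb u hu')]
      · refine ⟨∅, hemp, ?_⟩
        show ∅ ∩ (β.b ∪ s) = {v} ∩ β.b
        rw [Finset.singleton_inter_of_notMem (hBIG v hv), Finset.empty_inter]
    · refine ⟨{v}, singleton_mem_of_poly hpoly (hs hv), ?_⟩
      show {v} ∩ (β.b ∪ s) = {v}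
      rw [Finset.singleton_inter_of_mem (Finset.mem_union_right _ hv)]

lemma approx_pt {c : Set ℕ} (hc : c.Infinite) (hcb : ∀ z ∈ c, ∀ x ∈ β.b, x < z) (k : ℕ) :
    approx (β.b.card + k) (β.pt c) = β.pt ↑(vrestrict c k) := by
  have hcb' : ∀ v ∈ c, v ∉ β.b := fun v hv hmem => lt_irrefl v (hcb v hv v hmem)
  have h1 : vrestrict (↑β.b ∪ c) (β.b.card + k) = β.b ∪ vrestrict c k :=
    vr_union hc hcb k
  have h2 : frestrict (β.patt c) (β.b ∪ vrestrict c k) = β.patt ↑(vrestrict c k) := by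
    apply β.frestrict_eq (β.polypair_pt c)
    · exact ((hc.mono Set.subset_union_right).nonempty : (↑β.b ∪ c : Set ℕ).Nonempty)
    · exact subset_rfl
    · exact hcb'
    · exact β.frestrict_patt_b hcb'
    · exact fun v hv => Or.inr (vr_subset hc k hv)
    · exact fun v hv => hcb' v (vr_subset hc k hv)
  show (↑(vrestrict (↑β.b ∪ c) (β.b.card + k)), frestrict (β.patt c) (vrestrict (↑β.b ∪ c) (β.b.card + k))) = β.pt ↑(vrestrict c k)
  rw [h1, h2]
  show ((↑(β.b ∪ vrestrict c k) : Set ℕ), β.patt ↑(vrestrict c k)) = β.pt ↑(vrestrict c k)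
  rw [Finset.coe_union]
  rfl

lemma vr_zero (x : Set ℕ) : vrestrict x 0 = ∅ := by simp [vrestrict]

lemma pt_coe_empty : β.pt ↑(∅ : Finset ℕ) = (↑β.b, β.Sa) := by
  simp [pt, patt]

section HOM

variable (G : Set PolySpace)

/-- `[t; Z] ⊆ G`. -/
def Hom (t : Finset ℕ) (Z : Set ℕ) : Prop :=
  ∀ C : PolySpace, ple C.1 (β.pt (↑t ∪ Z)) → (∃ k, approx k C.1 = β.pt ↑t) → C ∈ G

def Rej (t : Finset ℕ) (Z : Set ℕ) : Prop :=
  ∀ Z' ⊆ Z, Z'.Infinite → ¬ β.Hom G t Z'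

def Ok (t : Finset ℕ) (Z : Set ℕ) : Prop :=
  Z.Infinite ∧ (∀ z ∈ Z, ∀ x ∈ β.b ∪ t, x < z) ∧ (∀ v ∈ t, ∀ x ∈ β.b, x < v)

variable {G}

lemma hom_mono {t : Finset ℕ} {Z Z' : Set ℕ} (hZ : Z' ⊆ Z) (h : β.Hom G t Z) :
    β.Hom G t Z' := fun C h1 h2 =>
  h C (ple_trans h1 (β.pt_ple (Set.union_subset_union_right _ hZ))) h2

lemma rej_mono {t : Finset ℕ} {Z Z' : Set ℕ} (hZ : Z' ⊆ Z) (h : β.Rej G t Z) :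
    β.Rej G t Z' := fun Z'' h1 h2 => h Z'' (h1.trans hZ) h2

lemma ok_mono {t : Finset ℕ} {Z Z' : Set ℕ} (hZ : Z' ⊆ Z) (hinf : Z'.Infinite)
    (h : β.Ok t Z) : β.Ok t Z' :=
  ⟨hinf, fun z hz => h.2.1 z (hZ hz), h.2.2⟩

lemma ok_insert {t : Finset ℕ} {Z : Set ℕ} (h : β.Ok t Z) {v : ℕ} (hv : v ∈ Z) :
    β.Ok (insert v t) (Z ∩ Set.Ioi v) := by
  refine ⟨inter_Ioi_infinite h.1 v, ?_, ?_⟩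
  · intro z hz x hx
    rcases Finset.mem_union.1 hx with hx | hx
    · exact h.2.1 z hz.1 x (Finset.mem_union_left _ hx)
    · rcases Finset.mem_insert.1 hx with rfl | hx
      · exact hz.2
      · exact h.2.1 z hz.1 x (Finset.mem_union_right _ hx)
  · intro w hw x hx
    rcases Finset.mem_insert.1 hw with rfl | hw
    · exact h.2.1 w hv x (Finset.mem_union_left _ hx)
    · exact h.2.2 w hw x hx

lemma ok_not_mem_b {t : Finset ℕ} {Z : Set ℕ} (h : β.Ok t Z) :
    ∀ v ∈ (↑t ∪ Z : Set ℕ), v ∉ β.b := by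
  rintro v (hv | hv) hvb
  · exact lt_irrefl v (h.2.2 v hv v hvb)
  · exact lt_irrefl v (h.2.1 v hv v (Finset.mem_union_left _ hvb))

lemma ok_disj {t : Finset ℕ} {Z : Set ℕ} (h : β.Ok t Z) : Disjoint β.b t := by
  rw [Finset.disjoint_right]
  exact fun {v} hv hb => β.ok_not_mem_b h v (Or.inl hv) hb

/-- Constructing a member of `[t; Z]`. -/
lemma pt_mem {t : Finset ℕ} {Y Z : Set ℕ} (hOk : β.Ok t Z) (hY : Y.Infinite) (hYZ : Y ⊆ Z) :
    ple (β.pt (↑t ∪ Y)) (β.pt (↑t ∪ Z)) ∧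
    approx (β.b.card + t.card) (β.pt (↑t ∪ Y)) = β.pt ↑t := by
  have hcinf : (↑t ∪ Y : Set ℕ).Infinite := hY.mono Set.subset_union_right
  have habove : ∀ z ∈ (↑t ∪ Y : Set ℕ), ∀ x ∈ β.b, x < z := by
    rintro z (hz | hz) x hx
    · exact hOk.2.2 z hz x hx
    · exact hOk.2.1 z (hYZ hz) x (Finset.mem_union_left _ hx)
  have hvr : vrestrict (↑t ∪ Y) t.card = t := by
    apply vr_eq_of hcinf rfl Set.subset_union_left
    rintro y (hy | hy) hyt z hz
    · exact absurd hy hyt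
    · exact hOk.2.1 y (hYZ hy) z (Finset.mem_union_right _ hz)
  refine ⟨β.pt_ple (Set.union_subset_union_right _ hYZ), ?_⟩
  rw [β.approx_pt hcinf habove t.card, hvr]

/-- Structure of an arbitrary member of `[t; Z]`. -/
lemma struct {t : Finset ℕ} {Z : Set ℕ} (hOk : β.Ok t Z) (C : PolySpace)
    (hple : ple C.1 (β.pt (↑t ∪ Z))) (happ : ∃ k, approx k C.1 = β.pt ↑t) :
    vrestrict C.1.1 (β.b.card + t.card) = β.b ∪ t ∧
    frestrict C.1.2 ↑(β.b ∪ t) = β.patt ↑t ∧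
    frestrict C.1.2 ↑β.b = β.Sa ∧
    C.1.1 \ ↑(β.b ∪ t) ⊆ Z ∧ (C.1.1 \ ↑(β.b ∪ t)).Infinite ∧
    (∀ y ∈ C.1.1, y ∉ β.b ∪ t → ∀ x ∈ β.b ∪ t, x < y) := by
  rcases happ with ⟨k, hk⟩
  have hfst : (↑(vrestrict C.1.1 k) : Set ℕ) = (↑β.b ∪ ↑t : Set ℕ) := congrArg Prod.fst hk
  have hvrk : vrestrict C.1.1 k = β.b ∪ t := by
    apply Finset.coe_injective
    rw [hfst, Finset.coe_union]
  have hkcard : k = β.b.card + t.card := by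
    have := vr_card C.2.2 k
    rw [hvrk, Finset.card_union_of_disjoint (β.ok_disj hOk)] at this
    omega
  subst hkcard
  have hfre : frestrict C.1.2 ↑(β.b ∪ t) = β.patt ↑t := by
    have h2 : frestrict C.1.2 (vrestrict C.1.1 (β.b.card + t.card)) = β.patt ↑t :=
      congrArg Prod.snd hk
    rwa [hvrk] at h2
  have hfreb : frestrict C.1.2 ↑β.b = β.Sa := by
    rw [← frestrict_frestrict C.1.2 (Finset.subset_union_left : β.b ⊆ β.b ∪ t), hfre]
    exact β.frestrict_patt_b (fun v hv => β.ok_not_mem_b hOk v (Or.inl hv))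
  have hinit : ∀ y ∈ C.1.1, y ∉ β.b ∪ t → ∀ x ∈ β.b ∪ t, x < y := by
    intro y hy hy' x hx
    exact vr_initial C.2.2 hy (hvrk ▸ hy') x (hvrk ▸ hx)
  refine ⟨hvrk, hfre, hfreb, ?_, ?_, hinit⟩
  · intro y hy
    have hy2 : y ∉ β.b ∪ t := fun hc => hy.2 (Finset.mem_coe.2 hc)
    rcases hple.1 hy.1 with h | h | h
    · exact absurd (Finset.mem_union_left t (Finset.mem_coe.1 h)) hy2
    · exact absurd (Finset.mem_union_right β.b (Finset.mem_coe.1 h)) hy2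
    · exact h
  · exact C.2.2.diff (Finset.finite_toSet _)

lemma Sa_subset {C : PolySpace} (hfreb : frestrict C.1.2 ↑β.b = β.Sa) : β.Sa ⊆ C.1.2 := by
  intro w hw
  rw [← hfreb] at hw
  rcases hw with ⟨u, hu, rfl⟩
  exact C.2.1.2.1 _ u Finset.inter_subset_left hu

/-- Upgrading the stem of a member along an initial segment `u` of its free part. -/
lemma upgrade {t : Finset ℕ} {Z : Set ℕ} (hOk : β.Ok t Z) (C : PolySpace)
    (hple : ple C.1 (β.pt (↑t ∪ Z))) (happ : ∃ k, approx k C.1 = β.pt ↑t)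
    {u : Finset ℕ} (hu : ↑u ⊆ C.1.1 \ ↑(β.b ∪ t))
    (hinit : ∀ y ∈ C.1.1, y ∉ β.b ∪ t ∪ u → ∀ z ∈ u, z < y) :
    approx (β.b.card + (t ∪ u).card) C.1 = β.pt ↑(t ∪ u) ∧
    ple (β.pt (↑(t ∪ u) ∪ (C.1.1 \ ↑(β.b ∪ t ∪ u)))) C.1 ∧
    ple C.1 (β.pt (↑(t ∪ u) ∪ (C.1.1 \ ↑(β.b ∪ t ∪ u)))) := by
  obtain ⟨hvrk, hfre, hfreb, hYZ, hYinf, hinit0⟩ := β.struct hOk C hple happ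
  have hbtC : (↑(β.b ∪ t) : Set ℕ) ⊆ C.1.1 := by
    rw [← hvrk]
    exact vr_subset C.2.2 _
  have hub : ∀ v ∈ u, v ∉ β.b ∪ t := fun v hv hc => (hu (Finset.mem_coe.2 hv)).2 (Finset.mem_coe.2 hc)
  have hdisj : Disjoint β.b (t ∪ u) := by
    rw [Finset.disjoint_right]
    rintro v hv hvb
    rcases Finset.mem_union.1 hv with h | h
    · exact β.ok_not_mem_b hOk v (Or.inl (Finset.mem_coe.2 h)) hvb
    · exact hub v h (Finset.mem_union_left _ hvb)
  have htub : ∀ v ∈ t ∪ u, v ∉ β.b := fun v hv hb => Finset.disjoint_right.1 hdisj hv hb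
  have htuC : (↑(t ∪ u) : Set ℕ) ⊆ C.1.1 := by
    intro v hv
    rcases Finset.mem_union.1 (Finset.mem_coe.1 hv) with h | h
    · exact hbtC (Finset.mem_coe.2 (Finset.mem_union_right β.b h))
    · exact (hu (Finset.mem_coe.2 h)).1
  have hvr2 : vrestrict C.1.1 (β.b.card + (t ∪ u).card) = β.b ∪ (t ∪ u) := by
    apply vr_eq_of C.2.2
    · rw [Finset.card_union_of_disjoint hdisj]
    · intro v hv
      rcases Finset.mem_union.1 (Finset.mem_coe.1 hv) with h | h
      · exact hbtC (Finset.mem_coe.2 (Finset.mem_union_left t h))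
      · exact htuC (Finset.mem_coe.2 h)
    · intro y hy hy' z hz
      rw [← Finset.union_assoc] at hz
      have hy'' : y ∉ β.b ∪ t ∪ u := by rwa [Finset.union_assoc]
      rcases Finset.mem_union.1 hz with h | h
      · exact hinit0 y hy (fun hc => hy'' (Finset.mem_union_left _ hc)) z h
      · exact hinit y hy hy'' z h
  have hfre2 : frestrict C.1.2 (β.b ∪ (t ∪ u)) = β.patt ↑(t ∪ u) :=
    β.frestrict_eq C.2.1 C.2.2.nonempty hple.2 (β.ok_not_mem_b hOk) hfreb htuC htub
  have happrox : approx (β.b.card + (t ∪ u).card) C.1 = β.pt ↑(t ∪ u) := by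
    show (↑(vrestrict C.1.1 (β.b.card + (t ∪ u).card)),
      frestrict C.1.2 (vrestrict C.1.1 (β.b.card + (t ∪ u).card))) = β.pt ↑(t ∪ u)
    rw [hvr2, hfre2]
    show ((↑(β.b ∪ (t ∪ u)) : Set ℕ), β.patt ↑(t ∪ u)) = β.pt ↑(t ∪ u)
    rw [Finset.coe_union]
    rfl
  have hSaC : β.Sa ⊆ C.1.2 := β.Sa_subset hfreb
  refine ⟨happrox, ⟨?_, ?_⟩, ⟨?_, ?_⟩⟩
  · -- pt ≤ C.1 : vertex sets
    rintro x (hx | hx | hx)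
    · exact hbtC (Finset.mem_coe.2 (Finset.mem_union_left t (Finset.mem_coe.1 hx)))
    · exact htuC hx
    · exact hx.1
  · -- pt ≤ C.1 : structures
    rintro w (hw | ⟨v, hv, rfl⟩)
    · exact hSaC hw
    · apply singleton_mem_of_poly C.2.1
      rcases hv with hv | hv
      · exact htuC hv
      · exact hv.1
  · -- C.1 ≤ pt : vertex sets
    intro x hx
    by_cases hmem : x ∈ β.b ∪ t ∪ u
    · rcases Finset.mem_union.1 hmem with h | h
      · rcases Finset.mem_union.1 h with h' | h'
        · exact Or.inl (Finset.mem_coe.2 h')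
        · exact Or.inr (Or.inl (Finset.mem_coe.2 (Finset.mem_union_left u h')))
      · exact Or.inr (Or.inl (Finset.mem_coe.2 (Finset.mem_union_right t h)))
    · exact Or.inr (Or.inr ⟨hx, fun hc => hmem (Finset.mem_coe.1 hc)⟩)
  · -- C.1 ≤ pt : structures
    intro w hw
    rcases hple.2 hw with hw' | ⟨v, hv, rfl⟩
    · exact Or.inl hw'
    · have hvC : v ∈ C.1.1 := C.2.1.1 {v} hw (Finset.mem_coe.2 (Finset.mem_singleton_self v))
      right
      by_cases hmem : v ∈ β.b ∪ t ∪ u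
      · have hvb : v ∉ β.b := β.ok_not_mem_b hOk v hv
        rcases Finset.mem_union.1 hmem with h | h
        · rcases Finset.mem_union.1 h with h' | h'
          · exact absurd h' hvb
          · exact ⟨v, Or.inl (Finset.mem_coe.2 (Finset.mem_union_left u h')), rfl⟩
        · exact ⟨v, Or.inl (Finset.mem_coe.2 (Finset.mem_union_right t h)), rfl⟩
      · exact ⟨v, Or.inr ⟨hvC, fun hc => hmem (Finset.mem_coe.1 hc)⟩, rfl⟩

end HOM

section TOP

lemma finPoly_pt (t : Finset ℕ) : FinPoly (β.pt ↑t) :=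
  ⟨β.polypair_pt _, (β.b.finite_toSet.union t.finite_toSet)⟩

lemma nbhd_open (a : PPair) (A : PolySpace) (h : FinPoly a) : @IsOpen _ ellTop (nbhd a A) :=
  TopologicalSpace.isOpen_generateFrom_of_mem ⟨a, A, h, rfl⟩

lemma dense_inter {G U : Set PolySpace} (hGd : @Dense _ ellTop G) (hUo : @IsOpen _ ellTop U)
    (hUne : U.Nonempty) : (U ∩ G).Nonempty := by
  letI : TopologicalSpace PolySpace := ellTop
  exact dense_iff_inter_open.1 hGd U hUo hUne

end TOP

section GALVIN

variable {G : Set PolySpace}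

lemma decide (G : Set PolySpace) (t : Finset ℕ) {Z : Set ℕ} (hZ : Z.Infinite) :
    ∃ Z' ⊆ Z, Z'.Infinite ∧ (β.Hom G t Z' ∨ β.Rej G t Z') := by
  by_cases h : ∃ Z' ⊆ Z, Z'.Infinite ∧ β.Hom G t Z'
  · rcases h with ⟨Z', h1, h2, h3⟩
    exact ⟨Z', h1, h2, Or.inl h3⟩
  · push_neg at h
    exact ⟨Z, subset_rfl, hZ, Or.inr (fun Z' h1 h2 => h Z' h1 h2)⟩

/-- Galvin's second lemma: from a rejected stem, all one-point extensions are rejected. -/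
lemma step_reject {t : Finset ℕ} {Z : Set ℕ} (hOk : β.Ok t Z) (hrej : β.Rej G t Z) :
    ∃ Z' ⊆ Z, Z'.Infinite ∧ ∀ w ∈ Z', β.Rej G (insert w t) (Z' ∩ Set.Ioi w) := by
  -- build the diagonal sequence
  have hstep : ∀ (k : ℕ) (W : Set ℕ), (W ⊆ Z ∧ W.Infinite) → ∃ W', (W' ⊆ Z ∧ W'.Infinite) ∧
      (W' ⊆ W ∩ Set.Ioi (sInf W) ∧
        (β.Hom G (insert (sInf W) t) W' ∨ β.Rej G (insert (sInf W) t) W')) := by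
    intro k W hW
    obtain ⟨Z', hZ'1, hZ'2, hZ'3⟩ := β.decide G (insert (sInf W) t)
      (inter_Ioi_infinite hW.2 (sInf W))
    exact ⟨Z', ⟨(hZ'1.trans Set.inter_subset_left).trans hW.1, hZ'2⟩, hZ'1, hZ'3⟩
  obtain ⟨F, hF0, hFP, hFrel⟩ := build_seq (fun _ W => W ⊆ Z ∧ W.Infinite)
    (fun _ W W' => W' ⊆ W ∩ Set.Ioi (sInf W) ∧
      (β.Hom G (insert (sInf W) t) W' ∨ β.Rej G (insert (sInf W) t) W'))
    Z ⟨subset_rfl, hOk.1⟩ hstep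
  set v : ℕ → ℕ := fun k => sInf (F k) with hv
  have hsub : ∀ k, F (k + 1) ⊆ F k := fun k =>
    (hFrel k).1.trans Set.inter_subset_left
  have hchain : ∀ k l, k ≤ l → F l ⊆ F k := by
    intro k l hkl
    induction l with
    | zero => rw [Nat.le_zero.1 hkl]
    | succ l ih =>
      rcases Nat.lt_or_ge k (l + 1) with h | h
      · exact (hsub l).trans (ih (Nat.lt_succ_iff.1 h))
      · rw [Nat.le_antisymm hkl h]
  have hvmem : ∀ k, v k ∈ F k := fun k => Nat.sInf_mem (hFP k).2.nonempty
  have hvgt : ∀ k, ∀ z ∈ F (k + 1), v k < z := fun k z hz => ((hFrel k).1 hz).2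
  have hvmono : StrictMono v := strictMono_nat_of_lt_succ fun k => hvgt k _ (hvmem (k + 1))
  have hvZ : ∀ k, v k ∈ Z := fun k => (hFP k).1 (hvmem k)
  set I : Set ℕ := {k | β.Hom G (insert (v k) t) (F (k + 1))} with hI
  rcases Set.finite_or_infinite I with hfin | hinf
  · -- cofinally rejected: the conclusion
    rcases hfin.bddAbove with ⟨K, hK⟩
    refine ⟨v '' Set.Ici (K + 1), ?_, ?_, ?_⟩
    · rintro w ⟨k, _, rfl⟩
      exact hvZ k
    · exact (Set.Ici_infinite _).image (hvmono.injective.injOn)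
    · rintro w ⟨k, hk, rfl⟩
      have hrk : β.Rej G (insert (v k) t) (F (k + 1)) := by
        rcases (hFrel k).2 with h | h
        · have h1 : k ≤ K := hK h
          have h2 : K + 1 ≤ k := hk
          omega
        · exact h
      apply β.rej_mono _ hrk
      rintro y ⟨⟨l, _, rfl⟩, hy2⟩
      have hlk : k < l := hvmono.lt_iff_lt.1 hy2
      exact hchain (k + 1) l hlk (hvmem l)
  · -- infinitely often accepted: contradiction with rejection of `t`
    exfalso
    set Zs : Set ℕ := v '' I with hZs
    have hZsZ : Zs ⊆ Z := by rintro w ⟨k, _, rfl⟩; exact hvZ k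
    have hZsinf : Zs.Infinite := hinf.image (hvmono.injective.injOn)
    apply hrej Zs hZsZ hZsinf
    -- show `Hom G t Zs`
    intro C hple happ
    have hOkZs : β.Ok t Zs := β.ok_mono hZsZ hZsinf hOk
    obtain ⟨hvrk, hfre, hfreb, hYZ, hYinf, hinit0⟩ := β.struct hOkZs C hple happ
    set Y : Set ℕ := C.1.1 \ ↑(β.b ∪ t) with hY
    have hy0 : sInf Y ∈ Y := Nat.sInf_mem hYinf.nonempty
    obtain ⟨k, hkI, hky0⟩ := hYZ hy0
    -- upgrade the stem by one point
    have hu1 : (↑({sInf Y} : Finset ℕ) : Set ℕ) ⊆ C.1.1 \ ↑(β.b ∪ t) := by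
      intro z hz
      rw [Finset.coe_singleton, Set.mem_singleton_iff] at hz
      exact hz ▸ hy0
    have hupg := β.upgrade hOkZs C hple happ (u := {sInf Y}) hu1 ?hinit
    case hinit =>
      intro y hy hy' z hz
      rw [Finset.mem_singleton] at hz
      subst hz
      have hyY : y ∈ Y := by
        refine ⟨hy, fun hc => hy' ?_⟩
        exact Finset.mem_union_left _ (Finset.mem_coe.1 hc)
      have hne : y ≠ sInf Y := by
        rintro rfl
        exact hy' (Finset.mem_union_right _ (Finset.mem_singleton_self _))
      exact lt_of_le_of_ne (Nat.sInf_le hyY) (Ne.symm hne)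
    obtain ⟨happ2, hple2, hple3⟩ := hupg
    -- apply the acceptance at stage k
    have hky0' : insert (v k) t = t ∪ {sInf Y} := by
      rw [hky0, union_singleton']
    have htail : C.1.1 \ ↑(β.b ∪ t ∪ {sInf Y}) ⊆ F (k + 1) := by
      intro y hy
      have hyY : y ∈ Y := by
        refine ⟨hy.1, fun hc => hy.2 ?_⟩
        exact Finset.mem_coe.2 (Finset.mem_union_left _ (Finset.mem_coe.1 hc))
      have hyne : y ≠ sInf Y := by
        rintro rfl
        exact hy.2 (Finset.mem_coe.2 (Finset.mem_union_right _ (Finset.mem_singleton_self _)))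
      have hygt : sInf Y < y := lt_of_le_of_ne (Nat.sInf_le hyY) (Ne.symm hyne)
      obtain ⟨l, hlI, hly⟩ := hYZ hyY
      have hlk : k < l := hvmono.lt_iff_lt.1 (by rw [hly, hky0]; exact hygt)
      exact hly ▸ hchain (k + 1) l hlk (hvmem l)
    apply hkI C
    · refine ple_trans hple3 (β.pt_ple ?_)
      rw [hky0']
      exact Set.union_subset_union_right _ htail
    · refine ⟨β.b.card + (t ∪ {sInf Y}).card, ?_⟩
      rw [hky0']
      exact happ2

lemma iter_reject (G : Set PolySpace) (L : List (Finset ℕ)) {Z : Set ℕ} (hZ : Z.Infinite)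
    (hOkL : ∀ t ∈ L, β.Ok t Z) (hrej : ∀ t ∈ L, β.Rej G t Z) :
    ∃ Z' ⊆ Z, Z'.Infinite ∧ ∀ t ∈ L, ∀ w ∈ Z', β.Rej G (insert w t) (Z' ∩ Set.Ioi w) := by
  induction L generalizing Z with
  | nil => exact ⟨Z, subset_rfl, hZ, by simp⟩
  | cons t L ih =>
    obtain ⟨Z₁, hZ₁sub, hZ₁inf, hZ₁⟩ := ih hZ
      (fun t' ht' => hOkL t' (List.mem_cons_of_mem _ ht'))
      (fun t' ht' => hrej t' (List.mem_cons_of_mem _ ht'))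
    obtain ⟨Z₂, hZ₂sub, hZ₂inf, hZ₂⟩ := β.step_reject
      (β.ok_mono (hZ₁sub) hZ₁inf (hOkL t (List.mem_cons_self)))
      (β.rej_mono hZ₁sub (hrej t (List.mem_cons_self)))
    refine ⟨Z₂, hZ₂sub.trans hZ₁sub, hZ₂inf, ?_⟩
    intro t' ht' w hw
    rcases List.mem_cons.1 ht' with rfl | ht'
    · exact hZ₂ w hw
    · exact β.rej_mono (Set.inter_subset_inter_left _ hZ₂sub) (hZ₁ t' ht' w (hZ₂sub hw))

/-- Galvin's lemma: a dense open set contains a full neighborhood `[t; Z']`. -/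
lemma dense_open_hom (hGo : @IsOpen _ ellTop G) (hGd : @Dense _ ellTop G)
    {t : Finset ℕ} {Z : Set ℕ} (hOk : β.Ok t Z) :
    ∃ Z' ⊆ Z, Z'.Infinite ∧ β.Hom G t Z' := by
  by_contra hcon
  push_neg at hcon
  have hrej : β.Rej G t Z := fun Z' h1 h2 h3 => hcon Z' h1 h2 h3
  -- the fusion invariant
  set P : ℕ → Finset ℕ × Set ℕ → Prop := fun k p =>
    p.2 ⊆ Z ∧ p.2.Infinite ∧ ↑p.1 ⊆ Z ∧ (∀ z ∈ p.2, ∀ x ∈ p.1, x < z) ∧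
      (∀ s ⊆ p.1, β.Rej G (t ∪ s) p.2) ∧ p.1.card = k with hPdef
  set R : ℕ → Finset ℕ × Set ℕ → Finset ℕ × Set ℕ → Prop := fun _ p q =>
    q.2 ⊆ p.2 ∧ ∃ v ∈ p.2, q.1 = insert v p.1 ∧ (∀ z ∈ q.2, v < z) with hRdef
  have hOkext : ∀ (k : ℕ) (p : Finset ℕ × Set ℕ), P k p → ∀ s ⊆ p.1, β.Ok (t ∪ s) p.2 := by
    intro k p hp s hs
    refine ⟨hp.2.1, ?_, ?_⟩
    · intro z hz x hx
      rcases Finset.mem_union.1 hx with h | h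
      · exact hOk.2.1 z (hp.1 hz) x (Finset.mem_union_left _ h)
      · rcases Finset.mem_union.1 h with h' | h'
        · exact hOk.2.1 z (hp.1 hz) x (Finset.mem_union_right _ h')
        · exact hp.2.2.2.1 z hz x (hs h')
    · intro w hw x hx
      rcases Finset.mem_union.1 hw with h | h
      · exact hOk.2.2 w h x hx
      · exact hOk.2.1 w (hp.2.2.1 (Finset.mem_coe.2 (hs h))) x (Finset.mem_union_left _ hx)
  have hstep : ∀ (k : ℕ) (p : Finset ℕ × Set ℕ), P k p → ∃ q, P (k + 1) q ∧ R k p q := by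
    intro k p hp
    have hokl : ∀ t' ∈ p.1.powerset.toList.map (t ∪ ·), β.Ok t' p.2 := by
      intro t' ht'
      rcases List.mem_map.1 ht' with ⟨s, hs, rfl⟩
      exact hOkext k p hp s (Finset.mem_powerset.1 (Finset.mem_toList.1 hs))
    have hrejl : ∀ t' ∈ p.1.powerset.toList.map (t ∪ ·), β.Rej G t' p.2 := by
      intro t' ht'
      rcases List.mem_map.1 ht' with ⟨s, hs, rfl⟩
      exact hp.2.2.2.2.1 s (Finset.mem_powerset.1 (Finset.mem_toList.1 hs))
    obtain ⟨W', hW'sub, hW'inf, hW'⟩ := β.iter_reject G (p.1.powerset.toList.map (t ∪ ·))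
      hp.2.1 hokl hrejl
    have hvW' : sInf W' ∈ W' := Nat.sInf_mem hW'inf.nonempty
    refine ⟨(insert (sInf W') p.1, W' ∩ Set.Ioi (sInf W')),
      ⟨(Set.inter_subset_left.trans hW'sub).trans hp.1,
        inter_Ioi_infinite hW'inf _, ?_, ?_, ?_, ?_⟩,
      Set.inter_subset_left.trans hW'sub, sInf W', hW'sub hvW', rfl, fun z hz => hz.2⟩
    · intro x hx
      rcases Finset.mem_insert.1 (Finset.mem_coe.1 hx) with rfl | h
      · exact hp.1 (hW'sub hvW')
      · exact hp.2.2.1 (Finset.mem_coe.2 h)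
    · intro z hz x hx
      rcases Finset.mem_insert.1 hx with rfl | h
      · exact hz.2
      · exact hp.2.2.2.1 z (hW'sub hz.1) x h
    · intro s hs
      by_cases hv : sInf W' ∈ s
      · have hs' : s.erase (sInf W') ⊆ p.1 := Finset.subset_insert_iff.1 hs
        have hins : t ∪ s = insert (sInf W') (t ∪ s.erase (sInf W')) := by
          rw [← Finset.union_insert, Finset.insert_erase hv]
        rw [hins]
        refine hW' (t ∪ s.erase (sInf W')) ?_ (sInf W') hvW'
        exact List.mem_map.2 ⟨s.erase (sInf W'),
          Finset.mem_toList.2 (Finset.mem_powerset.2 hs'), rfl⟩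
      · have hs' : s ⊆ p.1 := fun x hx =>
          (Finset.mem_insert.1 (hs hx)).resolve_left (fun h => hv (h ▸ hx))
        exact β.rej_mono (Set.inter_subset_left.trans hW'sub) (hp.2.2.2.2.1 s hs')
    · rw [Finset.card_insert_of_notMem, hp.2.2.2.2.2]
      intro hc
      exact lt_irrefl _ (hp.2.2.2.1 _ (hW'sub hvW') _ hc)
  have hbase : ∀ s ⊆ (∅ : Finset ℕ), β.Rej G (t ∪ s) Z := by
    intro s hs
    rw [Finset.subset_empty.1 hs, Finset.union_empty]
    exact hrej
  obtain ⟨F, hF0, hFP, hFrel⟩ := build_seq P R (∅, Z)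
    ⟨subset_rfl, hOk.1, by simp, by simp, hbase, by simp⟩ hstep
  -- extract structure of the fusion sequence
  have hsub2 : ∀ k, (F (k + 1)).2 ⊆ (F k).2 := fun k => (hFrel k).1
  have hchain2 : ∀ k l, k ≤ l → (F l).2 ⊆ (F k).2 := by
    intro k l hkl
    induction l with
    | zero => rw [Nat.le_zero.1 hkl]
    | succ l ih =>
      rcases Nat.lt_or_ge k (l + 1) with h | h
      · exact (hsub2 l).trans (ih (Nat.lt_succ_iff.1 h))
      · rw [Nat.le_antisymm hkl h]
  choose vs hvs1 hvs2 hvs3 using fun k => (hFrel k).2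
  have hchain1 : ∀ k l, k ≤ l → (F k).1 ⊆ (F l).1 := by
    intro k l hkl
    induction l with
    | zero => rw [Nat.le_zero.1 hkl]
    | succ l ih =>
      rcases Nat.lt_or_ge k (l + 1) with h | h
      · refine (ih (Nat.lt_succ_iff.1 h)).trans ?_
        rw [hvs2 l]
        exact Finset.subset_insert _ _
      · rw [Nat.le_antisymm hkl h]
  set W : Set ℕ := {x | ∃ k, x ∈ (F k).1} with hW
  have hWZ : W ⊆ Z := by
    rintro x ⟨k, hk⟩
    exact (hFP k).2.2.1 (Finset.mem_coe.2 hk)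
  have hm5 : ∀ (k : ℕ), ∀ y ∈ (F k).1, ∀ K, y ∈ (F K).1 ∨ y ∈ (F K).2 := by
    intro k
    induction k with
    | zero => rw [hF0]; intro y hy; exact absurd hy (Finset.notMem_empty y)
    | succ k ih =>
      intro y hy K
      rw [hvs2 k] at hy
      rcases Finset.mem_insert.1 hy with rfl | hy'
      · rcases Nat.lt_or_ge K (k + 1) with h | h
        · exact Or.inr (hchain2 K k (Nat.lt_succ_iff.1 h) (hvs1 k))
        · exact Or.inl (hchain1 (k + 1) K h (by rw [hvs2 k]; exact Finset.mem_insert_self _ _))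
      · exact ih y hy' K
  have hmem5 : ∀ y ∈ W, ∀ K, y ∉ (F K).1 → y ∈ (F K).2 := by
    rintro y ⟨k, hk⟩ K hK
    exact (hm5 k y hk K).resolve_left hK
  have hWinf : W.Infinite := by
    intro hfin
    have hsubW : ∀ k, (F k).1 ⊆ hfin.toFinset := by
      intro k x hx
      exact hfin.mem_toFinset.2 ⟨k, hx⟩
    have := Finset.card_le_card (hsubW (hfin.toFinset.card + 1))
    rw [(hFP (hfin.toFinset.card + 1)).2.2.2.2.2] at this
    omega
  have hOkW : β.Ok t W := β.ok_mono hWZ hWinf hOk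
  -- density argument
  have hBinf : (↑t ∪ W : Set ℕ).Infinite := hWinf.mono Set.subset_union_right
  set Bp : PolySpace := ⟨β.pt (↑t ∪ W), β.infPoly_pt hBinf⟩ with hBp
  have hUopen := nbhd_open (β.pt ↑t) Bp (β.finPoly_pt t)
  have hUne : (nbhd (β.pt ↑t) Bp).Nonempty :=
    ⟨Bp, ple_refl _, β.b.card + t.card, (β.pt_mem hOkW hWinf subset_rfl).2⟩
  obtain ⟨Pp, hPU, hPG⟩ := dense_inter hGd hUopen hUne
  obtain ⟨m, hm, hmsub⟩ := basis_lemma hGo Pp hPG (β.b.card + t.card)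
  obtain ⟨hvrk, hfre, hfreb, hYW, hYinf, hinit0⟩ := β.struct hOkW Pp hPU.1 hPU.2
  set Y : Set ℕ := Pp.1.1 \ ↑(β.b ∪ t) with hY
  set uF : Finset ℕ := vrestrict Y (m - (β.b.card + t.card)) with huF
  have hucard : uF.card = m - (β.b.card + t.card) := vr_card hYinf _
  have huY : ↑uF ⊆ Y := vr_subset hYinf _
  have hinitu : ∀ y ∈ Pp.1.1, y ∉ β.b ∪ t ∪ uF → ∀ z ∈ uF, z < y := by
    intro y hy hy' z hz
    have hyY : y ∈ Y := by
      refine ⟨hy, fun hc => hy' (Finset.mem_union_left _ (Finset.mem_coe.1 hc))⟩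
    have hyu : y ∉ uF := fun hc => hy' (Finset.mem_union_right _ hc)
    exact vr_initial hYinf hyY hyu z hz
  obtain ⟨happ2, hple2, hple3⟩ := β.upgrade hOkW Pp hPU.1 hPU.2 (u := uF) huY hinitu
  have hdisj_tu : Disjoint t uF := by
    rw [Finset.disjoint_right]
    intro z hz hzt
    exact (huY (Finset.mem_coe.2 hz)).2
      (Finset.mem_coe.2 (Finset.mem_union_right _ hzt))
  have hmeq : β.b.card + (t ∪ uF).card = m := by
    rw [Finset.card_union_of_disjoint hdisj_tu, hucard]
    omega
  have happm : approx m Pp.1 = β.pt ↑(t ∪ uF) := hmeq ▸ happ2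
  set tail : Set ℕ := Pp.1.1 \ ↑(β.b ∪ t ∪ uF) with htail
  have hHomTail : β.Hom G (t ∪ uF) tail := by
    intro C hpleC happC
    apply hmsub
    refine ⟨ple_trans hpleC hple2, ?_⟩
    rcases happC with ⟨j, hj⟩
    exact ⟨j, hj.trans happm.symm⟩
  have htailinf : tail.Infinite := Pp.2.2.diff (Finset.finite_toSet _)
  have htailY : ∀ y ∈ tail, y ∈ Y ∧ y ∉ uF := by
    intro y hy
    refine ⟨⟨hy.1, fun hc => hy.2 (Finset.mem_coe.2 (Finset.mem_union_left _ (Finset.mem_coe.1 hc)))⟩,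
      fun hc => hy.2 (Finset.mem_coe.2 (Finset.mem_union_right _ hc))⟩
  by_cases huem : uF = ∅
  · rw [huem, Finset.union_empty] at hHomTail
    have : tail = Y := by
      rw [htail, hY, huem, Finset.union_empty]
    rw [this] at hHomTail
    exact hrej Y (hYW.trans hWZ) hYinf hHomTail
  · have hune : uF.Nonempty := Finset.nonempty_of_ne_empty huem
    set ym : ℕ := uF.max' hune with hym
    have hymuF : ym ∈ uF := uF.max'_mem hune
    have hymW : ym ∈ W := hYW (huY (Finset.mem_coe.2 hymuF))
    have hex : ∃ k, ym ∈ (F k).1 := hymW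
    have hKmem := Nat.find_spec hex
    have hKpos : Nat.find hex ≠ 0 := by
      intro hc
      rw [hc, hF0] at hKmem
      exact Finset.notMem_empty _ hKmem
    obtain ⟨K', hKs⟩ := Nat.exists_eq_succ_of_ne_zero hKpos
    rw [hKs] at hKmem
    have hmin : ym ∉ (F K').1 := Nat.find_min hex (by omega)
    have hymvs : ym = vs K' := by
      have h2 := hKmem
      rw [hvs2 K'] at h2
      rcases Finset.mem_insert.1 h2 with h | h
      · exact h
      · exact absurd h hmin
    have hall : ∀ x ∈ (F (K' + 1)).1, x ≤ ym := by
      intro x hx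
      rw [hvs2 K'] at hx
      rcases Finset.mem_insert.1 hx with rfl | h
      · rw [hymvs]
      · rw [hymvs]
        exact le_of_lt ((hFP K').2.2.2.1 (vs K') (hvs1 K') x h)
    have hsubuF : uF ⊆ (F (K' + 1)).1 := by
      intro z hz
      by_contra hzc
      have hzW : z ∈ W := hYW (huY (Finset.mem_coe.2 hz))
      have hz2 : z ∈ (F (K' + 1)).2 := hmem5 z hzW _ hzc
      have := (hFP (K' + 1)).2.2.2.1 z hz2 ym hKmem
      exact absurd (uF.le_max' z hz) (not_le.2 this)
    have htailsub : tail ⊆ (F (K' + 1)).2 := by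
      intro y hy
      obtain ⟨hyY, hyu⟩ := htailY y hy
      have hygt : ym < y := vr_initial hYinf hyY hyu ym hymuF
      have hyW : y ∈ W := hYW hyY
      apply hmem5 y hyW
      intro hc
      exact absurd (hall y hc) (not_le.2 hygt)
    exact β.rej_mono htailsub ((hFP (K' + 1)).2.2.2.2.1 uF hsubuF) tail subset_rfl htailinf hHomTail

lemma iter_hom (Gs : ℕ → Set PolySpace) (hGo : ∀ j, @IsOpen _ ellTop (Gs j))
    (hGd : ∀ j, @Dense _ ellTop (Gs j)) (L : List (Finset ℕ × ℕ)) {Z : Set ℕ}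
    (hZ : Z.Infinite) (hOkL : ∀ p ∈ L, β.Ok p.1 Z) :
    ∃ Z' ⊆ Z, Z'.Infinite ∧ ∀ p ∈ L, β.Hom (Gs p.2) p.1 Z' := by
  induction L generalizing Z with
  | nil => exact ⟨Z, subset_rfl, hZ, by simp⟩
  | cons q L ih =>
    obtain ⟨Z₁, h1, h2, h3⟩ := ih hZ (fun p hp => hOkL p (List.mem_cons_of_mem _ hp))
    obtain ⟨Z₂, g1, g2, g3⟩ := β.dense_open_hom (hGo q.2) (hGd q.2)
      (β.ok_mono h1 h2 (hOkL q (List.mem_cons_self)))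
    refine ⟨Z₂, g1.trans h1, g2, ?_⟩
    intro p hp
    rcases List.mem_cons.1 hp with rfl | hp
    · exact g3
    · exact β.hom_mono g1 (h3 p hp)

end GALVIN

end EBase

end BASE

/-- Every subset of `𝒫` that is meager w.r.t. the Ellentuck topology is Ramsey null. -/
theorem meager_isRamseyNull (X : Set PolySpace) (hX : @IsMeagre PolySpace ellTop X) :
    IsRamseyNull X := by
  intro a A hFin hNe
  obtain ⟨B₀, hpleB₀, k₀, hk₀⟩ := hNe
  have hBpoly : IsPolyPair B₀.1 := B₀.2.1
  have hBinf : B₀.1.1.Infinite := B₀.2.2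
  -- set up the stem base
  set b : Finset ℕ := vrestrict B₀.1.1 k₀ with hb
  set Sa : Set (Finset ℕ) := frestrict B₀.1.2 b with hSa
  have hS0' : ∅ ∈ B₀.1.2 := by
    obtain ⟨n0, hn0⟩ := hBinf.nonempty
    obtain ⟨u, hu, _⟩ := hBpoly.2.2 n0 hn0
    exact hBpoly.2.1 ∅ u (Finset.empty_subset u) hu
  set β : EBase :=
    { b := b
      Sa := Sa
      hSb := by
        rintro u ⟨u', _, rfl⟩
        exact Finset.inter_subset_right
      hSh := by
        rintro u v huv ⟨v', hv', rfl⟩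
        refine ⟨u, hBpoly.2.1 u v' (huv.trans Finset.inter_subset_left) hv', ?_⟩
        exact Finset.inter_eq_left.2 (huv.trans Finset.inter_subset_right)
      hS0 := ⟨∅, hS0', Finset.empty_inter b⟩
      hScov := by
        intro m hm
        obtain ⟨u, hu, hmu⟩ := hBpoly.2.2 m (vr_subset hBinf k₀ (Finset.mem_coe.2 hm))
        exact ⟨u ∩ b, ⟨u, hu, rfl⟩, Finset.mem_inter.2 ⟨hmu, hm⟩⟩ } with hβ
  have ha : a = ((↑β.b : Set ℕ), β.Sa) := hk₀.symm
  have ha2 : a = β.pt ↑(∅ : Finset ℕ) := ha.trans β.pt_coe_empty.symm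
  have hfrebB : frestrict B₀.1.2 ↑β.b = β.Sa := rfl
  -- the ambient free set
  set V₀ : Set ℕ := B₀.1.1 \ ↑β.b with hV₀
  have hV₀inf : V₀.Infinite := hBinf.diff (Finset.finite_toSet _)
  have hOkV : β.Ok ∅ V₀ := by
    refine ⟨hV₀inf, ?_, by simp⟩
    intro z hz xx hxx
    rcases Finset.mem_union.1 hxx with h | h
    · exact vr_initial hBinf hz.1 (fun hc => hz.2 (Finset.mem_coe.2 hc)) xx h
    · exact absurd h (Finset.notMem_empty xx)
  -- meagerness data
  have hX' : Xᶜ ∈ @residual PolySpace ellTop := hX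
  obtain ⟨S', hS'o, hS'd, hS'c, hS'sub⟩ := (@mem_residual_iff PolySpace ellTop Xᶜ).1 hX'
  have hcnt : (insert Set.univ S').Countable := hS'c.insert _
  obtain ⟨f, hf⟩ := hcnt.exists_eq_range ⟨_, Set.mem_insert _ _⟩
  have hrange : ∀ j, f j ∈ insert Set.univ S' := by
    intro j
    rw [hf]
    exact Set.mem_range_self j
  have hGo : ∀ j, @IsOpen _ ellTop (f j) := by
    intro j
    rcases Set.mem_insert_iff.1 (hrange j) with h | h
    · rw [h]; exact @isOpen_univ _ ellTop
    · exact hS'o _ h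
  have hGd : ∀ j, @Dense _ ellTop (f j) := by
    intro j
    rcases Set.mem_insert_iff.1 (hrange j) with h | h
    · rw [h]; exact @dense_univ _ ellTop
    · exact hS'd _ h
  have hinter : ∀ C : PolySpace, (∀ j, C ∈ f j) → C ∈ Xᶜ := by
    intro C hC
    apply hS'sub
    intro s hs
    have : s ∈ Set.range f := by rw [← hf]; exact Set.mem_insert_of_mem _ hs
    rcases this with ⟨j, rfl⟩
    exact hC j
  -- the main fusion
  set P : ℕ → Finset ℕ × Set ℕ → Prop := fun k p =>
    p.2 ⊆ V₀ ∧ p.2.Infinite ∧ ↑p.1 ⊆ V₀ ∧ (∀ z ∈ p.2, ∀ x ∈ p.1, x < z) ∧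
      (∀ s ⊆ p.1, ∀ j < k, β.Hom (f j) s p.2) ∧ p.1.card = k with hPdef
  set R : ℕ → Finset ℕ × Set ℕ → Finset ℕ × Set ℕ → Prop := fun _ p q =>
    q.2 ⊆ p.2 ∧ ∃ v ∈ p.2, q.1 = insert v p.1 ∧ (∀ z ∈ q.2, v < z) with hRdef
  have hOkext : ∀ (k : ℕ) (p : Finset ℕ × Set ℕ), P k p →
      ∀ (s : Finset ℕ), ↑s ⊆ V₀ → (∀ z ∈ p.2, ∀ x ∈ s, x < z) → β.Ok s p.2 := by
    intro k p hp s hs hord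
    refine ⟨hp.2.1, ?_, ?_⟩
    · intro z hz xx hxx
      rcases Finset.mem_union.1 hxx with h | h
      · exact hOkV.2.1 z (hp.1 hz) xx (Finset.mem_union_left _ h)
      · exact hord z hz xx h
    · intro w hw xx hxx
      exact hOkV.2.1 w (hs (Finset.mem_coe.2 hw)) xx (Finset.mem_union_left _ hxx)
  have hstep : ∀ (k : ℕ) (p : Finset ℕ × Set ℕ), P k p → ∃ q, P (k + 1) q ∧ R k p q := by
    intro k p hp
    have hvp : sInf p.2 ∈ p.2 := Nat.sInf_mem hp.2.1.nonempty
    set W₀ : Set ℕ := p.2 ∩ Set.Ioi (sInf p.2) with hW₀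
    have hW₀inf : W₀.Infinite := inter_Ioi_infinite hp.2.1 _
    set Fn : Finset ℕ := insert (sInf p.2) p.1 with hFn
    have hFnV : ↑Fn ⊆ V₀ := by
      intro x hx
      rcases Finset.mem_insert.1 (Finset.mem_coe.1 hx) with rfl | h
      · exact hp.1 hvp
      · exact hp.2.2.1 (Finset.mem_coe.2 h)
    set L : List (Finset ℕ × ℕ) := (Fn.powerset ×ˢ Finset.range (k + 1)).toList with hL
    have hOkL : ∀ q ∈ L, β.Ok q.1 W₀ := by
      intro q hq
      have hq' := Finset.mem_product.1 (Finset.mem_toList.1 hq)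
      have hq1 : q.1 ⊆ Fn := Finset.mem_powerset.1 hq'.1
      refine ⟨hW₀inf, ?_, ?_⟩
      · intro z hz xx hxx
        rcases Finset.mem_union.1 hxx with h | h
        · exact hOkV.2.1 z (hp.1 hz.1) xx (Finset.mem_union_left _ h)
        · rcases Finset.mem_insert.1 (hq1 h) with rfl | h'
          · exact hz.2
          · exact hp.2.2.2.1 z hz.1 xx h'
      · intro w hw xx hxx
        exact hOkV.2.1 w (hFnV (Finset.mem_coe.2 (hq1 hw))) xx (Finset.mem_union_left _ hxx)
    obtain ⟨Z', hZ'1, hZ'2, hZ'3⟩ := β.iter_hom f hGo hGd L hW₀inf hOkL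
    refine ⟨(Fn, Z'), ⟨(hZ'1.trans Set.inter_subset_left).trans hp.1, hZ'2, hFnV, ?_, ?_, ?_⟩,
      hZ'1.trans Set.inter_subset_left, sInf p.2, hvp, rfl, fun z hz => (hZ'1 hz).2⟩
    · intro z hz xx hxx
      rcases Finset.mem_insert.1 hxx with rfl | h
      · exact (hZ'1 hz).2
      · exact hp.2.2.2.1 z ((hZ'1.trans Set.inter_subset_left) hz) xx h
    · intro s hs j hj
      refine hZ'3 (s, j) ?_
      rw [hL]
      exact Finset.mem_toList.2 (Finset.mem_product.2
        ⟨Finset.mem_powerset.2 hs, Finset.mem_range.2 hj⟩)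
    · rw [hFn, Finset.card_insert_of_notMem, hp.2.2.2.2.2]
      intro hc
      exact lt_irrefl _ (hp.2.2.2.1 _ hvp _ hc)
  have hbase : P 0 (∅, V₀) := ⟨subset_rfl, hV₀inf, by simp, by simp, by omega, by simp⟩
  obtain ⟨F, hF0, hFP, hFrel⟩ := build_seq P R (∅, V₀) hbase hstep
  -- extract fusion structure
  have hsub2 : ∀ k, (F (k + 1)).2 ⊆ (F k).2 := fun k => (hFrel k).1
  have hchain2 : ∀ k l, k ≤ l → (F l).2 ⊆ (F k).2 := by
    intro k l hkl
    induction l with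
    | zero => rw [Nat.le_zero.1 hkl]
    | succ l ih =>
      rcases Nat.lt_or_ge k (l + 1) with h | h
      · exact (hsub2 l).trans (ih (Nat.lt_succ_iff.1 h))
      · rw [Nat.le_antisymm hkl h]
  choose vs hvs1 hvs2 hvs3 using fun k => (hFrel k).2
  have hchain1 : ∀ k l, k ≤ l → (F k).1 ⊆ (F l).1 := by
    intro k l hkl
    induction l with
    | zero => rw [Nat.le_zero.1 hkl]
    | succ l ih =>
      rcases Nat.lt_or_ge k (l + 1) with h | h
      · refine (ih (Nat.lt_succ_iff.1 h)).trans ?_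
        rw [hvs2 l]
        exact Finset.subset_insert _ _
      · rw [Nat.le_antisymm hkl h]
  set W : Set ℕ := {x | ∃ k, x ∈ (F k).1} with hW
  have hWV : W ⊆ V₀ := by
    rintro x ⟨k, hk⟩
    exact (hFP k).2.2.1 (Finset.mem_coe.2 hk)
  have hm5 : ∀ (k : ℕ), ∀ y ∈ (F k).1, ∀ K, y ∈ (F K).1 ∨ y ∈ (F K).2 := by
    intro k
    induction k with
    | zero => rw [hF0]; intro y hy; exact absurd hy (Finset.notMem_empty y)
    | succ k ih =>
      intro y hy K
      rw [hvs2 k] at hy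
      rcases Finset.mem_insert.1 hy with rfl | hy'
      · rcases Nat.lt_or_ge K (k + 1) with h | h
        · exact Or.inr (hchain2 K k (Nat.lt_succ_iff.1 h) (hvs1 k))
        · exact Or.inl (hchain1 (k + 1) K h (by rw [hvs2 k]; exact Finset.mem_insert_self _ _))
      · exact ih y hy' K
  have hmem5 : ∀ y ∈ W, ∀ K, y ∉ (F K).1 → y ∈ (F K).2 := by
    rintro y ⟨k, hk⟩ K hK
    exact (hm5 k y hk K).resolve_left hK
  have hWinf : W.Infinite := by
    intro hfin
    have hsubW : ∀ k, (F k).1 ⊆ hfin.toFinset := by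
      intro k x hx
      exact hfin.mem_toFinset.2 ⟨k, hx⟩
    have := Finset.card_le_card (hsubW (hfin.toFinset.card + 1))
    rw [(hFP (hfin.toFinset.card + 1)).2.2.2.2.2] at this
    omega
  have hOkW : β.Ok ∅ W := β.ok_mono hWV hWinf hOkV
  -- the final member `B`
  have hBinf2 : (↑(∅ : Finset ℕ) ∪ W : Set ℕ).Infinite := hWinf.mono Set.subset_union_right
  refine ⟨⟨β.pt (↑(∅ : Finset ℕ) ∪ W), β.infPoly_pt hBinf2⟩, ⟨?_, ?_⟩, ?_⟩
  · -- ple into A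
    refine ple_trans (Q := B₀.1) ⟨?_, ?_⟩ hpleB₀
    · rintro x (hx | hx | hx)
      · exact vr_subset hBinf k₀ hx
      · exact absurd hx (by simp)
      · exact (hWV hx).1
    · rintro w (hw | ⟨v, hv, rfl⟩)
      · exact β.Sa_subset (C := B₀) hfrebB hw
      · apply EBase.singleton_mem_of_poly hBpoly
        rcases hv with hv | hv
        · exact absurd hv (by simp)
        · exact (hWV hv).1
  · -- correct approximation
    exact ⟨β.b.card + (∅ : Finset ℕ).card, (β.pt_mem hOkW hWinf subset_rfl).2.trans ha2.symm⟩
  · -- the neighborhood misses X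
    rw [Set.eq_empty_iff_forall_notMem]
    rintro C ⟨hCn, hCX⟩
    have hple : ple C.1 (β.pt (↑(∅ : Finset ℕ) ∪ W)) := hCn.1
    have happ : ∃ k, approx k C.1 = β.pt ↑(∅ : Finset ℕ) := by
      rcases hCn.2 with ⟨k, hk⟩
      exact ⟨k, hk.trans ha2⟩
    obtain ⟨hvrk, hfre, hfreb, hYW, hYinf, hinit0⟩ := β.struct hOkW C hple happ
    set Y : Set ℕ := C.1.1 \ ↑(β.b ∪ ∅) with hY
    have hCall : ∀ j, C ∈ f j := by
      intro j
      -- pick a late element of Y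
      have hbig : ∃ y ∈ Y, y ∉ (F (j + 1)).1 := by
        by_contra hc
        push_neg at hc
        exact hYinf (((F (j + 1)).1.finite_toSet).subset (fun y hy => Finset.mem_coe.2 (hc y hy)))
      obtain ⟨ym, hymY, hymnot⟩ := hbig
      have hex : ∃ k, ym ∈ (F k).1 := hYW hymY
      have hKmem := Nat.find_spec hex
      have hKj : j + 1 ≤ Nat.find hex := by
        by_contra hc
        push_neg at hc
        exact hymnot (hchain1 _ _ (by omega) hKmem)
      have hKpos : Nat.find hex ≠ 0 := by omega
      obtain ⟨K', hKs⟩ := Nat.exists_eq_succ_of_ne_zero hKpos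
      rw [hKs] at hKmem
      have hmin : ym ∉ (F K').1 := Nat.find_min hex (by omega)
      have hymvs : ym = vs K' := by
        have h2 := hKmem
        rw [hvs2 K'] at h2
        rcases Finset.mem_insert.1 h2 with h | h
        · exact h
        · exact absurd h hmin
      have hall : ∀ x ∈ (F (K' + 1)).1, x ≤ ym := by
        intro x hx
        rw [hvs2 K'] at hx
        rcases Finset.mem_insert.1 hx with rfl | h
        · rw [hymvs]
        · rw [hymvs]
          exact le_of_lt ((hFP K').2.2.2.1 (vs K') (hvs1 K') x h)
      -- the initial segment of Y up to ym
      have hfinu : (Y ∩ Set.Iic ym).Finite := (Set.finite_Iic ym).subset Set.inter_subset_right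
      set uF : Finset ℕ := hfinu.toFinset with huF
      have huFco : ↑uF = Y ∩ Set.Iic ym := hfinu.coe_toFinset
      have hymuF : ym ∈ uF := hfinu.mem_toFinset.2 ⟨hymY, le_refl ym⟩
      have huY : ↑uF ⊆ Y := by rw [huFco]; exact Set.inter_subset_left
      have hgtu : ∀ y ∈ Y, y ∉ uF → ym < y := by
        intro y hy hy'
        by_contra hc
        exact hy' (hfinu.mem_toFinset.2 ⟨hy, not_lt.1 hc⟩)
      have hinitu : ∀ y ∈ C.1.1, y ∉ β.b ∪ ∅ ∪ uF → ∀ z ∈ uF, z < y := by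
        intro y hy hy' z hz
        have hyY : y ∈ Y := ⟨hy, fun hc =>
          hy' (Finset.mem_union_left _ (Finset.mem_coe.1 hc))⟩
        have hyu : y ∉ uF := fun hc => hy' (Finset.mem_union_right _ hc)
        have hzym : z ≤ ym := ((hfinu.mem_toFinset.1 hz).2 : z ∈ Set.Iic ym)
        exact lt_of_le_of_lt hzym (hgtu y hyY hyu)
      obtain ⟨happ2, hple2u, hple3u⟩ := β.upgrade hOkW C hple happ (u := uF) huY hinitu
      -- place everything inside stage K' + 1
      have hsubuF : ∅ ∪ uF ⊆ (F (K' + 1)).1 := by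
        rw [Finset.empty_union]
        intro z hz
        by_contra hzc
        have hzW : z ∈ W := hYW (huY (Finset.mem_coe.2 hz))
        have hz2 : z ∈ (F (K' + 1)).2 := hmem5 z hzW _ hzc
        have := (hFP (K' + 1)).2.2.2.1 z hz2 ym hKmem
        exact absurd ((hfinu.mem_toFinset.1 hz).2 : z ≤ ym) (not_le.2 this)
      have htailsub : C.1.1 \ ↑(β.b ∪ ∅ ∪ uF) ⊆ (F (K' + 1)).2 := by
        intro y hy
        have hyY : y ∈ Y := ⟨hy.1, fun hc => hy.2 (Finset.mem_coe.2
          (Finset.mem_union_left _ (Finset.mem_coe.1 hc)))⟩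
        have hyu : y ∉ uF := fun hc => hy.2 (Finset.mem_coe.2 (Finset.mem_union_right _ hc))
        have hygt : ym < y := hgtu y hyY hyu
        apply hmem5 y (hYW hyY)
        intro hc
        exact absurd (hall y hc) (not_le.2 hygt)
      have hHom : β.Hom (f j) (∅ ∪ uF) (C.1.1 \ ↑(β.b ∪ ∅ ∪ uF)) := by
        apply β.hom_mono htailsub
        exact (hFP (K' + 1)).2.2.2.2.1 (∅ ∪ uF) hsubuF j (by omega)
      exact hHom C hple3u ⟨_, happ2⟩
    exact (hinter C hCall) hCX
end

section
/- The finitization axiom holds for 𝒫: (i) for (A,S_A),(B,S_B) ∈ 𝒫, (A,S_A) ≤ (B,S_B) if and only if for every n there exists m with r_n(A,S_A) ≤_fin r_m(B,S_B); (ii) for every (a,S_a) ∈ 𝒜𝒫 the set {(b,S_b) ∈ 𝒜𝒫 : (b,S_b) ≤_fin (a,S_a)} is finite; (iii) if (a,S_a) ≤_fin (b,S_b) and (c,S_c) ⊑ (a,S_a), then there exists (d,S_d) ⊑ (b,S_b) with (c,S_c) ≤_fin (d,S_d). -/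
open Set

/-- `(a,S_a) ≤_fin (b,S_b)` iff `(a,S_a) ≤ (b,S_b)` and `max a = max b`. -/
def plefin (P Q : PPair) : Prop := ple P Q ∧ sSup P.1 = sSup Q.1

/-- The Ellentuck neighborhood `[(a,S_a); (A,S_A)]` inside `𝒫`. -/
def nbhdRaw (a A : PPair) : Set PPair :=
  {B | InfPoly B ∧ ple B A ∧ ∃ n, approx n B = a}

/-- `depth_{(A,S_A)}(a,S_a)`. -/
noncomputable def pdepth (A a : PPair) : ℕ := sInf {n | plefin a (approx n A)}

/-- `(c,S_c) ⊑ (a,S_a)` : `(c,S_c) = r_m(a,S_a)` for some `m ≤ |a|`. -/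
noncomputable def psub (c a : PPair) : Prop := ∃ m ≤ a.1.ncard, c = approx m a

open scoped Classical

lemma mem_vrestrict {x : Set ℕ} {n z : ℕ} :
    z ∈ vrestrict x n ↔ ∃ i < n, Nat.nth (· ∈ x) i = z := by
  simp [vrestrict]

lemma vrestrict_zero (x : Set ℕ) : vrestrict x 0 = ∅ := by simp [vrestrict]

/-- Core combinatorial lemma: if `x ⊆ y`, `S ⊆ T`, `T` hereditary, and the `n`-th
approximation of `(x,S)` is well-defined, then it is `≤_fin` some approximation of `(y,T)`,
with a bound on the index when `y` is finite. -/
lemma key_approx {x y : Set ℕ} {S T : Set (Finset ℕ)}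
    (hxy : x ⊆ y) (hST : S ⊆ T) (hT : Hereditary T) {n : ℕ}
    (hnx : ∀ hf : (setOf (· ∈ x)).Finite, n ≤ hf.toFinset.card) :
    ∃ m, (∀ hf : (setOf (· ∈ y)).Finite, m ≤ hf.toFinset.card) ∧
      plefin (approx n (x, S)) (approx m (y, T)) := by
  rcases n with _ | k
  · refine ⟨0, fun _ => Nat.zero_le _, ⟨?_, ?_⟩, ?_⟩
    · simp [approx, vrestrict_zero]
    · rintro u ⟨v, hv, rfl⟩
      exact ⟨v, hST hv, by simp [vrestrict_zero]⟩
    · simp [approx, vrestrict_zero]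
  · set t := Nat.nth (· ∈ x) k with ht
    have hcard : ∀ hf : (setOf (· ∈ x)).Finite, k < hf.toFinset.card :=
      fun hf => lt_of_lt_of_le (Nat.lt_succ_self k) (hnx hf)
    have htx : t ∈ x := Nat.nth_mem k hcard
    have hty : t ∈ y := hxy htx
    have hcy : ∀ hf : (setOf (· ∈ y)).Finite,
        Nat.count (· ∈ y) t < hf.toFinset.card := fun hf => Nat.count_lt_card hf hty
    refine ⟨Nat.count (· ∈ y) t + 1, fun hf => hcy hf, ?_, ?_⟩
    · -- ple
      have hsub : vrestrict x (k + 1) ⊆ vrestrict y (Nat.count (· ∈ y) t + 1) := by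
        intro z hz
        obtain ⟨i, hi, rfl⟩ := mem_vrestrict.1 hz
        have hik : i ≤ k := Nat.lt_succ_iff.1 hi
        have hzx : Nat.nth (· ∈ x) i ∈ x :=
          Nat.nth_mem i fun hf => lt_of_le_of_lt hik (hcard hf)
        have hzt : Nat.nth (· ∈ x) i ≤ t := Nat.nth_le_nth' hik hcard
        have hzy : Nat.nth (· ∈ x) i ∈ y := hxy hzx
        refine mem_vrestrict.2 ⟨Nat.count (· ∈ y) (Nat.nth (· ∈ x) i), ?_,
          Nat.nth_count hzy⟩
        exact Nat.lt_succ_of_le (Nat.count_monotone _ hzt)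
      constructor
      · exact fun z hz => hsub hz
      · rintro u ⟨v, hv, rfl⟩
        refine ⟨v ∩ vrestrict x (k + 1), hT _ v Finset.inter_subset_left (hST hv), ?_⟩
        exact Finset.inter_eq_left.2 (Finset.inter_subset_right.trans hsub)
    · -- sSup equality
      have h1 : IsGreatest (↑(vrestrict x (k + 1)) : Set ℕ) t := by
        constructor
        · exact Finset.mem_coe.2 (mem_vrestrict.2 ⟨k, Nat.lt_succ_self k, rfl⟩)
        · intro z hz
          obtain ⟨i, hi, rfl⟩ := mem_vrestrict.1 (Finset.mem_coe.1 hz)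
          exact Nat.nth_le_nth' (Nat.lt_succ_iff.1 hi) hcard
      have h2 : IsGreatest (↑(vrestrict y (Nat.count (· ∈ y) t + 1)) : Set ℕ) t := by
        constructor
        · exact Finset.mem_coe.2
            (mem_vrestrict.2 ⟨Nat.count (· ∈ y) t, Nat.lt_succ_self _, Nat.nth_count hty⟩)
        · intro z hz
          obtain ⟨j, hj, rfl⟩ := mem_vrestrict.1 (Finset.mem_coe.1 hz)
          have : Nat.nth (· ∈ y) j ≤ Nat.nth (· ∈ y) (Nat.count (· ∈ y) t) :=
            Nat.nth_le_nth' (Nat.lt_succ_iff.1 hj) hcy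
          rwa [Nat.nth_count hty] at this
      exact h1.csSup_eq.trans h2.csSup_eq.symm

/-- Axiom A.2 (finitization) for `𝒫`:
(i) `A ≤ B` iff every approximation of `A` is `≤_fin` some approximation of `B`;
(ii) each `(a,S_a) ∈ 𝒜𝒫` has only finitely many `≤_fin`-predecessors in `𝒜𝒫`;
(iii) if `(a,S_a) ≤_fin (b,S_b)` and `(c,S_c) ⊑ (a,S_a)` then `(c,S_c) ≤_fin (d,S_d)`
for some `(d,S_d) ⊑ (b,S_b)`. -/
theorem polyPair_axiom_A2 :
    (∀ A B : PPair, InfPoly A → InfPoly B →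
      (ple A B ↔ ∀ n : ℕ, ∃ m : ℕ, plefin (approx n A) (approx m B))) ∧
    (∀ a : PPair, FinPoly a → {b : PPair | FinPoly b ∧ plefin b a}.Finite) ∧
    (∀ a b c : PPair, FinPoly a → FinPoly b → plefin a b → psub c a →
      ∃ d : PPair, psub d b ∧ plefin c d) := by
  refine ⟨?_, ?_, ?_⟩
  · -- (i)
    intro A B hA hB
    constructor
    · intro hle n
      have hnx : ∀ hf : (setOf (· ∈ A.1)).Finite, n ≤ hf.toFinset.card := by
        intro hf
        exact absurd (hf : A.1.Finite) hA.2
      obtain ⟨m, -, hm⟩ := key_approx hle.1 hle.2 hB.1.2.1 hnx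
      exact ⟨m, hm⟩
    · intro h
      constructor
      · -- vertex sets
        intro z hz
        obtain ⟨m, hm⟩ := h (Nat.count (· ∈ A.1) z + 1)
        have hzmem : z ∈ vrestrict A.1 (Nat.count (· ∈ A.1) z + 1) :=
          mem_vrestrict.2 ⟨Nat.count (· ∈ A.1) z, Nat.lt_succ_self _, Nat.nth_count hz⟩
        have : z ∈ (↑(vrestrict B.1 m) : Set ℕ) := hm.1.1 hzmem
        obtain ⟨j, -, rfl⟩ := mem_vrestrict.1 (Finset.mem_coe.1 this)
        exact Nat.nth_mem_of_infinite hB.2 j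
      · -- simplex collections
        intro u hu
        have husub : (↑u : Set ℕ) ⊆ A.1 := hA.1.1 u hu
        set n := u.sup (Nat.count (· ∈ A.1)) + 1 with hn
        have husub' : u ⊆ vrestrict A.1 n := by
          intro z hz
          refine mem_vrestrict.2 ⟨Nat.count (· ∈ A.1) z, ?_, Nat.nth_count (husub hz)⟩
          exact Nat.lt_succ_of_le (Finset.le_sup hz)
        obtain ⟨m, hm⟩ := h n
        have humem : u ∈ frestrict A.2 (vrestrict A.1 n) :=
          ⟨u, hu, Finset.inter_eq_left.2 husub'⟩
        obtain ⟨v, hv, heq⟩ := hm.1.2 humem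
        exact hB.1.2.1 u v (heq ▸ Finset.inter_subset_left) hv
  · -- (ii)
    intro a ha
    have ha2 : a.2.Finite := by
      have : a.2 ⊆ (fun s : Finset ℕ => (s : Set ℕ)) ⁻¹' {s : Set ℕ | s ⊆ a.1} := by
        intro u hu
        exact ha.1.1 u hu
      exact Set.Finite.subset
        ((ha.2.finite_subsets).preimage (Set.injOn_of_injective Finset.coe_injective)) this
    refine Set.Finite.subset ((ha.2.finite_subsets).prod (ha2.finite_subsets)) ?_
    rintro b ⟨-, hb⟩
    exact ⟨hb.1.1, hb.1.2⟩
  · -- (iii)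
    intro a b c ha hb hab hca
    obtain ⟨m, hm, rfl⟩ := hca
    have hnx : ∀ hf : (setOf (· ∈ a.1)).Finite, m ≤ hf.toFinset.card := by
      intro hf
      exact hm.trans_eq (Set.ncard_eq_toFinset_card a.1 hf)
    obtain ⟨m', hm', hle⟩ := key_approx hab.1.1 hab.1.2 hb.1.2.1 hnx
    refine ⟨approx m' b, ⟨m', ?_, rfl⟩, hle⟩
    rw [Set.ncard_eq_toFinset_card b.1 hb.2]
    exact hm' hb.2
end
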